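/- arXiv:1811.06381 — 6 statements merged into one kernel-verified Lean document; each statement's English description precedes it below -/
import Mathlib

section
/- Let K be a field, q ∈ K nonzero, and s ∈ K with s² = q. The family of monomials x^k · θ^l · y^m, indexed by (k, l, m) ∈ ℕ × {0, 1} × ℕ (where x, θ, y denote the images of the generators in the quotient), is a K-vector-space basis of the algebra O(SP_q^{2|1}). -/
/-!
Moving a generator to the right of a monomial `x^k θ^l y^m` with the defining relations
(`y` past `x` and `θ`, `θ` past `x`, and `θ²` replaced by a multiple of `yx`) produces a scalar
multiple of a single monomial, so the monomials span. For independence, let the algebra act on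
the free vector space over `ℕ × Fin 2 × ℕ` by the left multiplication formulas these rules
predict: each generator acts as a weighted shift of basis vectors, the relations are checked on
weights, and the monomial indexed by `p` maps the basis vector at `(0, 0, 0)` to the one at `p`.
-/

/-- The defining relations of the quantum symplectic superspace algebra
`O(SP_q^{2|1})`: generator `0` is `x`, generator `1` is `θ`, generator `2` is `y`.
The relations are `xθ = qθx`, `xy = q²yx`, `yθ = q⁻¹θy`, `θ² = s(q-1)yx`. -/
inductive SPRel {K : Type*} [Field K] (q s : K) :
    FreeAlgebra K (Fin 3) → FreeAlgebra K (Fin 3) → Prop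
  | xθ : SPRel q s (FreeAlgebra.ι K 0 * FreeAlgebra.ι K 1)
      (q • (FreeAlgebra.ι K 1 * FreeAlgebra.ι K 0))
  | xy : SPRel q s (FreeAlgebra.ι K 0 * FreeAlgebra.ι K 2)
      ((q ^ 2) • (FreeAlgebra.ι K 2 * FreeAlgebra.ι K 0))
  | yθ : SPRel q s (FreeAlgebra.ι K 2 * FreeAlgebra.ι K 1)
      (q⁻¹ • (FreeAlgebra.ι K 1 * FreeAlgebra.ι K 2))
  | θθ : SPRel q s (FreeAlgebra.ι K 1 * FreeAlgebra.ι K 1)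
      ((s * (q - 1)) • (FreeAlgebra.ι K 2 * FreeAlgebra.ι K 0))

namespace Finsupp

variable {ι R : Type*} [CommSemiring R] (σ τ : ι → ι) (w v : ι → R)

noncomputable def weightedShift : Module.End R (ι →₀ R) :=
  linearCombination R fun i => single (σ i) (w i)

@[simp]
lemma weightedShift_single (i : ι) (c : R) :
    weightedShift σ w (single i c) = single (σ i) (c * w i) := by
  rw [weightedShift, linearCombination_single, smul_single, smul_eq_mul]

lemma weightedShift_mul :
    weightedShift σ w * weightedShift τ v = weightedShift (σ ∘ τ) fun i => w (τ i) * v i :=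
  lhom_ext fun i c => by
    simp only [Module.End.mul_apply, weightedShift_single, Function.comp_apply, mul_assoc,
      mul_comm (v i)]

lemma smul_weightedShift (c : R) :
    c • weightedShift σ w = weightedShift σ fun i => c * w i :=
  lhom_ext fun i c => by
    simp only [LinearMap.smul_apply, weightedShift_single, smul_single, smul_eq_mul, mul_left_comm]

end Finsupp

section

variable {R A : Type*} [CommSemiring R] [Semiring A] [Algebra R A]

lemma pow_mul_eq_smul_mul_pow {a b : A} {c : R} (h : a * b = c • (b * a)) (n : ℕ) :
    a ^ n * b = c ^ n • (b * a ^ n) := by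
  induction n with
  | zero => simp
  | succ n ih =>
    rw [pow_succ, mul_assoc, h, mul_smul_comm, ← mul_assoc, ih, smul_mul_assoc, smul_smul,
      mul_assoc, ← pow_succ, ← pow_succ']

lemma Submodule.span_range_eq_top_of_mul_ι_mem {X ι : Type*} (φ : FreeAlgebra R X →ₐ[R] A)
    (hφ : Function.Surjective φ) (b : ι → A) (h1 : (1 : A) ∈ span R (Set.range b))
    (hmul : ∀ j i, b j * φ (FreeAlgebra.ι R i) ∈ span R (Set.range b)) :
    span R (Set.range b) = ⊤ := by
  set M := span R (Set.range b)
  have hmulM (w : FreeAlgebra R X) : ∀ m ∈ M, m * φ w ∈ M := by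
    induction w using FreeAlgebra.induction with
    | grade0 r =>
      intro m hm
      rw [AlgHom.commutes, Algebra.algebraMap_eq_smul_one, mul_smul_comm, mul_one]
      exact M.smul_mem r hm
    | grade1 i =>
      intro m hm
      induction hm using span_induction with
      | mem _ h => obtain ⟨j, rfl⟩ := h; exact hmul j i
      | zero => simp
      | add _ _ _ _ h h' => rw [add_mul]; exact M.add_mem h h'
      | smul r _ _ h => rw [smul_mul_assoc]; exact M.smul_mem r h
    | mul u v hu hv => intro m hm; rw [map_mul, ← mul_assoc]; exact hv _ (hu m hm)
    | add u v hu hv => intro m hm; rw [map_add, mul_add]; exact M.add_mem (hu m hm) (hv m hm)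
  refine eq_top_iff.mpr fun a _ => ?_
  obtain ⟨w, rfl⟩ := hφ a
  simpa using hmulM w 1 h1

end

namespace SPRel

open Finsupp

variable {K : Type*} [Field K] (q s : K)

noncomputable def gen (i : Fin 3) : RingQuot (SPRel q s) :=
  RingQuot.mkAlgHom K (SPRel q s) (FreeAlgebra.ι K i)

noncomputable def monomial (p : ℕ × Fin 2 × ℕ) : RingQuot (SPRel q s) :=
  gen q s 0 ^ p.1 * gen q s 1 ^ (p.2.1 : ℕ) * gen q s 2 ^ p.2.2

lemma gen_x_mul_θ : gen q s 0 * gen q s 1 = q • (gen q s 1 * gen q s 0) := by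
  simpa only [gen, map_mul, map_smul] using RingQuot.mkAlgHom_rel K (SPRel.xθ (q := q) (s := s))

lemma gen_x_mul_y : gen q s 0 * gen q s 2 = q ^ 2 • (gen q s 2 * gen q s 0) := by
  simpa only [gen, map_mul, map_smul] using RingQuot.mkAlgHom_rel K (SPRel.xy (q := q) (s := s))

lemma gen_y_mul_θ : gen q s 2 * gen q s 1 = q⁻¹ • (gen q s 1 * gen q s 2) := by
  simpa only [gen, map_mul, map_smul] using RingQuot.mkAlgHom_rel K (SPRel.yθ (q := q) (s := s))

lemma gen_θ_mul_θ : gen q s 1 * gen q s 1 = (s * (q - 1)) • (gen q s 2 * gen q s 0) := by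
  simpa only [gen, map_mul, map_smul] using RingQuot.mkAlgHom_rel K (SPRel.θθ (q := q) (s := s))

variable {q}

lemma gen_y_mul_x (hq : q ≠ 0) :
    gen q s 2 * gen q s 0 = (q ^ 2)⁻¹ • (gen q s 0 * gen q s 2) := by
  rw [gen_x_mul_y, smul_smul, inv_mul_cancel₀ (pow_ne_zero 2 hq), one_smul]

lemma gen_θ_mul_x (hq : q ≠ 0) : gen q s 1 * gen q s 0 = q⁻¹ • (gen q s 0 * gen q s 1) := by
  rw [gen_x_mul_θ, smul_smul, inv_mul_cancel₀ hq, one_smul]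

lemma monomial_mul_x (hq : q ≠ 0) (k : ℕ) (l : Fin 2) (m : ℕ) :
    monomial q s (k, l, m) * gen q s 0 =
      ((q ^ 2)⁻¹ ^ m * q⁻¹ ^ (l : ℕ)) • monomial q s (k + 1, l, m) := by
  simp only [monomial]
  rw [mul_assoc, pow_mul_eq_smul_mul_pow (gen_y_mul_x s hq), mul_smul_comm, ← mul_assoc,
    mul_assoc (_ ^ k), pow_mul_eq_smul_mul_pow (gen_θ_mul_x s hq), mul_smul_comm,
    smul_mul_assoc, smul_smul, ← mul_assoc, ← pow_succ]

lemma monomial_mul_y (k : ℕ) (l : Fin 2) (m : ℕ) :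
    monomial q s (k, l, m) * gen q s 2 = monomial q s (k, l, m + 1) := by
  simp only [monomial, mul_assoc, ← pow_succ]

lemma monomial_zero_mul_θ (k m : ℕ) :
    monomial q s (k, 0, m) * gen q s 1 = q⁻¹ ^ m • monomial q s (k, 1, m) := by
  simp only [monomial, Fin.val_zero, Fin.val_one, pow_zero, pow_one, mul_one]
  rw [mul_assoc, pow_mul_eq_smul_mul_pow (gen_y_mul_θ q s), mul_smul_comm, ← mul_assoc]

lemma monomial_one_mul_θ (hq : q ≠ 0) (k m : ℕ) :
    monomial q s (k, 1, m) * gen q s 1 =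
      (q⁻¹ ^ m * (s * (q - 1)) * (q ^ 2)⁻¹) • monomial q s (k + 1, 0, m + 1) := by
  simp only [monomial, Fin.val_zero, Fin.val_one, pow_zero, pow_one, mul_one]
  rw [mul_assoc, pow_mul_eq_smul_mul_pow (gen_y_mul_θ q s), mul_smul_comm, mul_assoc,
    ← mul_assoc (gen q s 1), gen_θ_mul_θ, smul_mul_assoc, mul_smul_comm, gen_y_mul_x s hq,
    smul_mul_assoc, mul_smul_comm, smul_smul, smul_smul, pow_succ (gen q s 0) k,
    pow_succ' (gen q s 2) m]
  simp only [mul_assoc]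

lemma span_monomial_eq_top (hq : q ≠ 0) : Submodule.span K (Set.range (monomial q s)) = ⊤ := by
  have hmem (c : K) (p) : c • monomial q s p ∈ Submodule.span K (Set.range (monomial q s)) :=
    Submodule.smul_mem _ c (Submodule.subset_span ⟨p, rfl⟩)
  refine Submodule.span_range_eq_top_of_mul_ι_mem _ (RingQuot.mkAlgHom_surjective K _) _
    (by simpa [monomial] using hmem 1 (0, 0, 0)) fun ⟨k, l, m⟩ i => ?_
  change monomial q s (k, l, m) * gen q s i ∈ _
  match i, l with
  | 0, l => rw [monomial_mul_x s hq]; exact hmem _ _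
  | 1, 0 => rw [monomial_zero_mul_θ]; exact hmem _ _
  | 1, 1 => rw [monomial_one_mul_θ s hq]; exact hmem _ _
  | 2, l => rw [monomial_mul_y]; simpa using hmem 1 (k, l, m + 1)

/- `opX`, `opθ`, `opY` are left multiplication by `x`, `θ`, `y` written in the basis
`x^k θ^l y^m` that the algebra is expected to have, e.g. `θ · θ y^m = s(q-1) yx y^m` and
`θ x^k = q⁻ᵏ x^k θ` give `θ · x^k θ y^m = q⁻⁽ᵏ⁺²⁾ s(q-1) x^(k+1) y^(m+1)`. -/
def θIndex : ℕ × Fin 2 × ℕ → ℕ × Fin 2 × ℕ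
  | (k, 0, m) => (k, 1, m)
  | (k, 1, m) => (k + 1, 0, m + 1)

def θWeight (q s : K) : ℕ × Fin 2 × ℕ → K
  | (k, 0, _) => q⁻¹ ^ k
  | (k, 1, _) => q⁻¹ ^ (k + 2) * (s * (q - 1))

noncomputable def opX : Module.End K ((ℕ × Fin 2 × ℕ) →₀ K) :=
  weightedShift (fun p => (p.1 + 1, p.2)) 1

noncomputable def opθ (q s : K) : Module.End K ((ℕ × Fin 2 × ℕ) →₀ K) :=
  weightedShift θIndex (θWeight q s)

noncomputable def opY (q : K) : Module.End K ((ℕ × Fin 2 × ℕ) →₀ K) :=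
  weightedShift (fun p => (p.1, p.2.1, p.2.2 + 1)) fun p => q⁻¹ ^ (2 * p.1 + p.2.1)

lemma opX_mul_opθ (hq : q ≠ 0) : opX * opθ q s = q • (opθ q s * opX) := by
  simp only [opX, opθ, weightedShift_mul, smul_weightedShift]
  congr 1 <;> funext ⟨k, l, m⟩ <;> fin_cases l <;> simp [θIndex, θWeight] <;> field_simp <;>
    ring

lemma opX_mul_opY (hq : q ≠ 0) : opX * opY q = q ^ 2 • (opY q * opX) := by
  simp only [opX, opY, weightedShift_mul, smul_weightedShift]
  congr 1
  funext ⟨k, l, m⟩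
  simp
  field_simp
  ring

lemma opY_mul_opθ (hq : q ≠ 0) : opY q * opθ q s = q⁻¹ • (opθ q s * opY q) := by
  simp only [opθ, opY, weightedShift_mul, smul_weightedShift]
  congr 1 <;> funext ⟨k, l, m⟩ <;> fin_cases l <;> simp [θIndex, θWeight] <;> field_simp <;>
    ring

lemma opθ_mul_opθ (hq : q ≠ 0) : opθ q s * opθ q s = (s * (q - 1)) • (opY q * opX) := by
  simp only [opX, opθ, opY, weightedShift_mul, smul_weightedShift]
  congr 1 <;> funext ⟨k, l, m⟩ <;> fin_cases l <;> simp [θIndex, θWeight] <;> field_simp <;>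
    ring

noncomputable def rep (hq : q ≠ 0) :
    RingQuot (SPRel q s) →ₐ[K] Module.End K ((ℕ × Fin 2 × ℕ) →₀ K) :=
  RingQuot.liftAlgHom K ⟨FreeAlgebra.lift K ![opX, opθ q s, opY q], by
    rintro _ _ ⟨⟩ <;> simp only [map_mul, map_smul, FreeAlgebra.lift_ι_apply, Matrix.cons_val]
    · exact opX_mul_opθ s hq
    · exact opX_mul_opY hq
    · exact opY_mul_opθ s hq
    · exact opθ_mul_opθ s hq⟩

lemma rep_gen (hq : q ≠ 0) (i : Fin 3) : rep s hq (gen q s i) = ![opX, opθ q s, opY q] i := by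
  rw [rep, gen, RingQuot.liftAlgHom_mkAlgHom_apply, FreeAlgebra.lift_ι_apply]

lemma opX_pow_single (k : ℕ) (l : Fin 2) (m : ℕ) :
    (opX ^ k : Module.End K _) (single (0, l, m) 1) = single (k, l, m) 1 := by
  induction k with
  | zero => rfl
  | succ k ih => rw [pow_succ', Module.End.mul_apply, ih, opX, weightedShift_single]; simp

lemma opY_pow_single (m : ℕ) : (opY q ^ m) (single (0, 0, 0) 1) = single (0, 0, m) 1 := by
  induction m with
  | zero => rfl
  | succ m ih => rw [pow_succ', Module.End.mul_apply, ih, opY, weightedShift_single]; simp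

lemma rep_monomial_single_zero (hq : q ≠ 0) (p : ℕ × Fin 2 × ℕ) :
    rep s hq (monomial q s p) (single (0, 0, 0) 1) = single p 1 := by
  obtain ⟨k, l, m⟩ := p
  simp only [monomial, map_mul, map_pow, rep_gen, Matrix.cons_val, Module.End.mul_apply]
  rw [opY_pow_single]
  fin_cases l
  · simp [opX_pow_single]
  · simp [opθ, θWeight, θIndex, opX_pow_single]

lemma linearIndependent_monomial (hq : q ≠ 0) : LinearIndependent K (monomial q s) := by
  refine .of_comp ((LinearMap.applyₗ (single (0, 0, 0) 1)).comp (rep s hq).toLinearMap) ?_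
  convert Finsupp.linearIndependent_single_one K (ℕ × Fin 2 × ℕ) with p
  exact rep_monomial_single_zero s hq p

end SPRel

theorem monomials_form_basis_general (K : Type*) [Field K] (q s : K) (hq : q ≠ 0) :
    let x := RingQuot.mkAlgHom K (SPRel q s) (FreeAlgebra.ι K 0)
    let θ := RingQuot.mkAlgHom K (SPRel q s) (FreeAlgebra.ι K 1)
    let y := RingQuot.mkAlgHom K (SPRel q s) (FreeAlgebra.ι K 2)
    ∃ B : Module.Basis (ℕ × Fin 2 × ℕ) K (RingQuot (SPRel q s)),
      ∀ p : ℕ × Fin 2 × ℕ, B p = x ^ p.1 * θ ^ (p.2.1 : ℕ) * y ^ p.2.2 :=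
  ⟨.mk (SPRel.linearIndependent_monomial s hq) (SPRel.span_monomial_eq_top s hq).ge,
    Module.Basis.mk_apply _ _⟩

/-- the monomials `x^k θ^l y^m`, `(k,l,m) ∈ ℕ × {0,1} × ℕ`, form a
`K`-vector-space basis of `O(SP_q^{2|1})`. -/
theorem monomials_form_basis (K : Type*) [Field K] (q s : K) (hq : q ≠ 0) (hs : s ^ 2 = q) :
    let x := RingQuot.mkAlgHom K (SPRel q s) (FreeAlgebra.ι K 0)
    let θ := RingQuot.mkAlgHom K (SPRel q s) (FreeAlgebra.ι K 1)
    let y := RingQuot.mkAlgHom K (SPRel q s) (FreeAlgebra.ι K 2)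
    ∃ B : Module.Basis (ℕ × Fin 2 × ℕ) K (RingQuot (SPRel q s)),
      ∀ p : ℕ × Fin 2 × ℕ, B p = x ^ p.1 * θ ^ (p.2.1 : ℕ) * y ^ p.2.2 :=
  monomials_form_basis_general K q s hq
end

section
/- Let q > 0 be a real number and work in the algebra O(SP_q^{2|1}) over the field ℂ with s = √q. Set X := √q · y, Θ := i · θ, and Y := (1/√q) · x (where i ∈ ℂ is the imaginary unit and x, θ, y are the images of the generators). Then the following identities hold: Θ·X = q·X·Θ, Θ·Y = q⁻¹·Y·Θ, and X·Y − Y·X = q^{−1/2}(q+1)·Θ². (These are exactly the images of the defining relations under the superinvolution x₊* = q^{1/2}x₋, θ* = iθ, x₋* = q^{−1/2}x₊, showing that the defining ideal is invariant under this ℤ₂-graded involution, so that O(SP_q^{2|1}) becomes a super *-algebra when q > 0.) -/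
/-- The defining relations of the quantum symplectic superspace algebra
`O(SP_q^{2|1})` over `ℂ`: generator `0` is `x`, generator `1` is `θ`,
generator `2` is `y`. -/
inductive SPRelC (q s : ℂ) : FreeAlgebra ℂ (Fin 3) → FreeAlgebra ℂ (Fin 3) → Prop
  | xθ : SPRelC q s (FreeAlgebra.ι ℂ 0 * FreeAlgebra.ι ℂ 1)
      (q • (FreeAlgebra.ι ℂ 1 * FreeAlgebra.ι ℂ 0))
  | xy : SPRelC q s (FreeAlgebra.ι ℂ 0 * FreeAlgebra.ι ℂ 2)
      ((q ^ 2) • (FreeAlgebra.ι ℂ 2 * FreeAlgebra.ι ℂ 0))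
  | yθ : SPRelC q s (FreeAlgebra.ι ℂ 2 * FreeAlgebra.ι ℂ 1)
      (q⁻¹ • (FreeAlgebra.ι ℂ 1 * FreeAlgebra.ι ℂ 2))
  | θθ : SPRelC q s (FreeAlgebra.ι ℂ 1 * FreeAlgebra.ι ℂ 1)
      ((s * (q - 1)) • (FreeAlgebra.ι ℂ 2 * FreeAlgebra.ι ℂ 0))

/-!
The relations `xθ = qθx` and `yθ = q⁻¹θy` are `q`-commutation relations, and rescaling both
factors of a `q`-commutation relation preserves it; inverting them gives the first two
identities. For the third, `xy = q²yx` gives `XY - YX = (1 - q²)yx`, while `i² = -1` and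
`θ² = √q(q - 1)yx` give `q^{-1/2}(q + 1)Θ² = -q^{-1/2}(q + 1)√q(q - 1)yx = (1 - q²)yx`.
-/

section SPTriple

variable {K A : Type*} [Field K] [Ring A] [Algebra K A]

structure IsSPTriple (q s : K) (x θ y : A) : Prop where
  xθ : x * θ = q • (θ * x)
  xy : x * y = q ^ 2 • (y * x)
  yθ : y * θ = q⁻¹ • (θ * y)
  θθ : θ * θ = (s * (q - 1)) • (y * x)

theorem smul_mul_smul_eq_of_mul_eq_smul {r : K} {u v : A} (h : u * v = r • (v * u)) (a b : K) :
    a • u * (b • v) = r • (b • v * (a • u)) := by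
  rw [smul_mul_smul_comm, h, smul_mul_smul_comm, smul_comm, mul_comm]

namespace IsSPTriple

variable {q s : K} {x θ y : A}

theorem θ_mul_y (h : IsSPTriple q s x θ y) (hq : q ≠ 0) : θ * y = q • (y * θ) :=
  ((eq_inv_smul_iff₀ hq).mp h.yθ).symm

theorem θ_mul_x (h : IsSPTriple q s x θ y) (hq : q ≠ 0) : θ * x = q⁻¹ • (x * θ) :=
  ((inv_smul_eq_iff₀ hq).mpr h.xθ).symm

theorem smul_commutator_eq {b c : K} (h : IsSPTriple q s x θ y) (hc : c * c = -1) :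
    s • y * (b • x) - b • x * (s • y) = (b * (q + 1)) • (c • θ * (c • θ)) := by
  rw [smul_mul_smul_comm, smul_mul_smul_comm, smul_mul_smul_comm, h.xy, h.θθ]
  simp only [smul_smul]
  match_scalars
  linear_combination (-(b * (q + 1) * (s * (q - 1)))) * hc

end IsSPTriple

end SPTriple

theorem isSPTriple_mkAlgHom_ι (q s : ℂ) :
    IsSPTriple q s (RingQuot.mkAlgHom ℂ (SPRelC q s) (FreeAlgebra.ι ℂ 0))
      (RingQuot.mkAlgHom ℂ (SPRelC q s) (FreeAlgebra.ι ℂ 1))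
      (RingQuot.mkAlgHom ℂ (SPRelC q s) (FreeAlgebra.ι ℂ 2)) := by
  constructor <;> simp only [← map_mul, ← map_smul] <;>
    exact RingQuot.mkAlgHom_rel ℂ (by constructor)

/-- for real `q > 0`, the images `X = √q·y`, `Θ = i·θ`, `Y = √q⁻¹·x` of the
generators under the superinvolution again satisfy the defining relations of
`O(SP_q^{2|1})`, so the defining ideal is `*`-invariant. -/
theorem star_structure_relations (q : ℝ) (hq : 0 < q) :
    let x := RingQuot.mkAlgHom ℂ (SPRelC (q : ℂ) ((Real.sqrt q : ℝ) : ℂ)) (FreeAlgebra.ι ℂ 0)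
    let θ := RingQuot.mkAlgHom ℂ (SPRelC (q : ℂ) ((Real.sqrt q : ℝ) : ℂ)) (FreeAlgebra.ι ℂ 1)
    let y := RingQuot.mkAlgHom ℂ (SPRelC (q : ℂ) ((Real.sqrt q : ℝ) : ℂ)) (FreeAlgebra.ι ℂ 2)
    let X := ((Real.sqrt q : ℝ) : ℂ) • y
    let Θ := Complex.I • θ
    let Y := (((Real.sqrt q)⁻¹ : ℝ) : ℂ) • x
    Θ * X = (q : ℂ) • (X * Θ) ∧
    Θ * Y = ((q : ℂ))⁻¹ • (Y * Θ) ∧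
    X * Y - Y * X = ((((Real.sqrt q)⁻¹ : ℝ) : ℂ) * ((q : ℂ) + 1)) • (Θ * Θ) := by
  intro x θ y X Θ Y
  have h := isSPTriple_mkAlgHom_ι (q : ℂ) ((Real.sqrt q : ℝ) : ℂ)
  have hq0 : (q : ℂ) ≠ 0 := by exact_mod_cast hq.ne'
  exact ⟨smul_mul_smul_eq_of_mul_eq_smul (h.θ_mul_y hq0) _ _,
    smul_mul_smul_eq_of_mul_eq_smul (h.θ_mul_x hq0) _ _,
    h.smul_commutator_eq Complex.I_mul_I⟩
end

section
/- Let K be a field, q ∈ K nonzero, and s ∈ K with s² = q. Let A be an associative unital K-algebra containing elements x, θ, y with x invertible (a unit with inverse x⁻¹), satisfying xθ = qθx, θy = qyθ, yx = q⁻²xy, and θ² = s(q−1)yx. Set X := x⁻¹, Θ := −θ, and Y := −x·y·x. Then: Θ·X = q·X·Θ, Θ·Y = q⁻¹·Y·Θ, and Y·X − X·Y = −s⁻¹(q+1)·Θ². (These identities are exactly what is needed for the antipode S(x₊) = x₊⁻¹, S(θ) = −θ, S(x₋) = −x₊x₋x₊ of the super-Hopf algebra F(SP_q^{2|1}) to be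 a well-defined ℤ₂-graded anti-homomorphism.) -/
/-! The antipode images `X = x⁻¹`, `Θ = -θ`, `Y = -x y x` inherit their commutation rules from
`x, θ, y`: conjugating `x θ = q θ x` by `x⁻¹` gives `θ x⁻¹ = q x⁻¹ θ`, and moving `θ` across
`x y x` picks up the factors `q⁻¹ q q⁻¹ = q⁻¹`. For the last relation, `Y X - X Y = y x - x y`
and `Θ² = θ²` are both multiples of `x y`, and the scalars agree because `s² = q ≠ 0`. -/

def QCommute {R A : Type*} [SMul R A] [Mul A] (q : R) (a b : A) : Prop :=
  a * b = q • (b * a)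

namespace QCommute

variable {R A : Type*}

section Semiring

variable [CommSemiring R] [Semiring A] [Algebra R A] {q r : R} {a b c : A}

theorem mul_right (hab : QCommute q a b) (hac : QCommute r a c) :
    QCommute (q * r) a (b * c) := by
  unfold QCommute at *
  rw [← mul_assoc, hab, smul_mul_assoc, mul_assoc, hac, mul_smul_comm, smul_smul, mul_assoc]

theorem inv_swap {xinv : A} (hxr : b * xinv = 1) (hxl : xinv * b = 1)
    (hba : QCommute q b a) : QCommute q a xinv :=
  calc a * xinv = xinv * (b * a) * xinv := by
        rw [← mul_assoc, hxl, one_mul]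
    _ = q • (xinv * a) := by
        rw [hba, mul_smul_comm, smul_mul_assoc, mul_assoc, mul_assoc, hxr, mul_one]

end Semiring

theorem symm [Field R] [Semiring A] [Algebra R A] {q : R} {a b : A} (hq : q ≠ 0)
    (hab : QCommute q a b) : QCommute q⁻¹ b a := by
  unfold QCommute at *
  rw [hab, smul_smul, inv_mul_cancel₀ hq, one_smul]

section Ring

variable [CommSemiring R] [Ring A] [Algebra R A] {q : R} {a b : A}

theorem neg_left (hab : QCommute q a b) : QCommute q (-a) b := by
  unfold QCommute at *
  rw [neg_mul, mul_neg, hab, smul_neg]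

theorem neg_right (hab : QCommute q a b) : QCommute q a (-b) := by
  unfold QCommute at *
  rw [neg_mul, mul_neg, hab, smul_neg]

end Ring

end QCommute

/-- in any associative unital `K`-algebra containing elements `x, θ, y`
with `x` invertible and satisfying the relations of `SP_q^{2|1}`, the antipode images
`X = x⁻¹`, `Θ = -θ`, `Y = -x·y·x` satisfy the relations needed for the antipode of
`F(SP_q^{2|1})` to be a well-defined ℤ₂-graded anti-homomorphism. -/
theorem antipode_relations (K : Type*) [Field K] (q s : K) (hq : q ≠ 0) (hs : s ^ 2 = q)
    (A : Type*) [Ring A] [Algebra K A] (x θ y xinv : A)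
    (hxr : x * xinv = 1) (hxl : xinv * x = 1)
    (r1 : x * θ = q • (θ * x)) (r2 : θ * y = q • (y * θ))
    (r3 : y * x = (q ^ 2)⁻¹ • (x * y)) (r4 : θ * θ = (s * (q - 1)) • (y * x)) :
    let X := xinv
    let Θ := -θ
    let Y := -(x * y * x)
    Θ * X = q • (X * Θ) ∧
    Θ * Y = q⁻¹ • (Y * Θ) ∧
    Y * X - X * Y = (-(s⁻¹ * (q + 1))) • (Θ * Θ) := by
  intro X Θ Y
  have hθx : QCommute q⁻¹ θ x := QCommute.symm hq r1
  have hθxyx : QCommute q⁻¹ θ (x * y * x) := by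
    simpa [hq] using (hθx.mul_right (r2 : QCommute q θ y)).mul_right hθx
  have hs0 : s ≠ 0 := by rintro rfl; exact hq (by simp [← hs])
  have hscalar : -(s⁻¹ * (q + 1)) * (s * (q - 1)) * (q ^ 2)⁻¹ = (q ^ 2)⁻¹ - 1 := by
    field_simp
    ring
  refine ⟨(QCommute.inv_swap hxr hxl r1).neg_left, hθxyx.neg_left.neg_right, ?_⟩
  calc Y * X - X * Y = y * x - x * y := by
        simp only [Y, X, neg_mul, mul_neg, mul_assoc, hxr, ← mul_assoc xinv, hxl, one_mul,
          mul_one]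
        abel
    _ = (-(s⁻¹ * (q + 1))) • (Θ * Θ) := by
        rw [neg_mul_neg, r4, r3, smul_smul, smul_smul, hscalar, sub_smul, one_smul]
end

section
/- Let K be a field, q ∈ K nonzero with q ≠ 1, and s ∈ K with s² = q. In the algebra O(SP_q^{2|1}), for every natural number k ≥ 1 the following identity holds (where x, θ, y denote the images of the generators): x^k · y − y · x^k = s⁻¹ · ((q^{2k} − 1)/(q − 1)) · θ² · x^{k−1}. -/
/-! Since `x y = q² y x`, moving `y` past `x^k` costs `q^{2k}`, so `x^k y - y x^k = (q^{2k} - 1) y x^k`;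
the relation `θ² = s (q - 1) y x` turns `y x^k = y x · x^{k-1}` into `s⁻¹ (q - 1)⁻¹ θ² x^{k-1}`. -/

section QCommute

variable {R M : Type*}

theorem pow_mul_eq_smul_mul_pow_of_mul_eq_smul [CommMonoid R] [Monoid M] [MulAction R M]
    [IsScalarTower R M M] [SMulCommClass R M M] {a b : M} {c : R} (h : a * b = c • (b * a))
    (n : ℕ) : a ^ n * b = c ^ n • (b * a ^ n) := by
  induction n with
  | zero => simp
  | succ n ih =>
    calc a ^ (n + 1) * b = a ^ n * (a * b) := by rw [pow_succ, mul_assoc]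
      _ = c • (c ^ n • (b * a ^ n * a)) := by rw [h, mul_smul_comm, ← mul_assoc, ih, smul_mul_assoc]
      _ = c ^ (n + 1) • (b * a ^ (n + 1)) := by rw [smul_smul, ← pow_succ', mul_assoc, ← pow_succ]

theorem pow_mul_sub_mul_pow_of_mul_eq_smul [CommRing R] [Ring M] [Algebra R M] {a b : M} {c : R}
    (h : a * b = c • (b * a)) (n : ℕ) : a ^ n * b - b * a ^ n = (c ^ n - 1) • (b * a ^ n) := by
  rw [pow_mul_eq_smul_mul_pow_of_mul_eq_smul h, sub_smul, one_smul]

end QCommute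

namespace SPRel

variable {K : Type*} [Field K] (q s : K)

local notation "π" => RingQuot.mkAlgHom K (SPRel q s)

theorem mkAlgHom_x_mul_y :
    π (FreeAlgebra.ι K 0) * π (FreeAlgebra.ι K 2) =
      (q ^ 2) • (π (FreeAlgebra.ι K 2) * π (FreeAlgebra.ι K 0)) := by
  simpa only [map_mul, map_smul] using RingQuot.mkAlgHom_rel K (SPRel.xy (q := q) (s := s))

theorem mkAlgHom_θ_mul_θ :
    π (FreeAlgebra.ι K 1) * π (FreeAlgebra.ι K 1) =
      (s * (q - 1)) • (π (FreeAlgebra.ι K 2) * π (FreeAlgebra.ι K 0)) := by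
  simpa only [map_mul, map_smul] using RingQuot.mkAlgHom_rel K (SPRel.θθ (q := q) (s := s))

end SPRel

/-- in `O(SP_q^{2|1})` with `q ≠ 1`, for every `k ≥ 1` one has
`x^k y - y x^k = s⁻¹ ((q^{2k} - 1)/(q - 1)) θ² x^{k-1}`. -/
theorem power_commutator_with_y (K : Type*) [Field K] (q s : K)
    (hq : q ≠ 0) (hq1 : q ≠ 1) (hs : s ^ 2 = q) :
    let x := RingQuot.mkAlgHom K (SPRel q s) (FreeAlgebra.ι K 0)
    let θ := RingQuot.mkAlgHom K (SPRel q s) (FreeAlgebra.ι K 1)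
    let y := RingQuot.mkAlgHom K (SPRel q s) (FreeAlgebra.ι K 2)
    ∀ k : ℕ, 1 ≤ k →
      x ^ k * y - y * x ^ k =
        (s⁻¹ * ((q ^ (2 * k) - 1) / (q - 1))) • (θ * θ * x ^ (k - 1)) := by
  intro x θ y k hk
  obtain ⟨m, rfl⟩ : ∃ m, k = m + 1 := ⟨k - 1, (Nat.sub_add_cancel hk).symm⟩
  have hs0 : s ≠ 0 := by rintro rfl; exact hq (by rw [← hs]; ring)
  have hq1' : q - 1 ≠ 0 := sub_ne_zero.mpr hq1
  have hscalar : s⁻¹ * ((q ^ (2 * (m + 1)) - 1) / (q - 1)) * (s * (q - 1)) =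
      q ^ (2 * (m + 1)) - 1 := by
    field_simp
  rw [pow_mul_sub_mul_pow_of_mul_eq_smul (SPRel.mkAlgHom_x_mul_y q s), SPRel.mkAlgHom_θ_mul_θ,
    smul_mul_assoc, smul_smul, hscalar, Nat.add_sub_cancel, mul_assoc, ← pow_succ', ← pow_mul]
end

section
/- Let K be a field and h ∈ K. In the h-deformed algebra O(SP_h^{2|1}), the h-deformed supersphere r_h := h·X₊² − Θ² lies in the center; equivalently, r_h·X₊ = X₊·r_h, r_h·Θ = Θ·r_h, and r_h·X₋ = X₋·r_h (where X₊, Θ, X₋ denote the images of the generators in the quotient). -/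
/-! The relations make `X₊` and `Θ` commute, so both `X₊²` and `Θ²` commute with `X₊` and `Θ`.
Against `X₋` the two squares pick up the same correction: moving `X₋` through `X₊²` produces
`4X₊Θ²`, and moving it through `Θ²` produces `4hX₊Θ²`, so these cancel in `hX₊² - Θ²`. Since
the three generators generate the algebra, commuting with them is being central. -/

/-- The defining relations of the `h`-deformed symplectic superspace algebra
`O(SP_h^{2|1})`: generator `0` is `X₊`, generator `1` is `Θ`, generator `2` is `X₋`.
The relations are `X₊Θ = ΘX₊`, `X₋Θ = ΘX₋ - 2hΘX₊`, `X₊X₋ = X₋X₊ + 2Θ²`. -/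
inductive SPhRel {K : Type*} [Field K] (h : K) :
    FreeAlgebra K (Fin 3) → FreeAlgebra K (Fin 3) → Prop
  | r1 : SPhRel h (FreeAlgebra.ι K 0 * FreeAlgebra.ι K 1)
      (FreeAlgebra.ι K 1 * FreeAlgebra.ι K 0)
  | r2 : SPhRel h (FreeAlgebra.ι K 2 * FreeAlgebra.ι K 1)
      (FreeAlgebra.ι K 1 * FreeAlgebra.ι K 2
        - (2 * h) • (FreeAlgebra.ι K 1 * FreeAlgebra.ι K 0))
  | r3 : SPhRel h (FreeAlgebra.ι K 0 * FreeAlgebra.ι K 2)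
      (FreeAlgebra.ι K 2 * FreeAlgebra.ι K 0
        + (2 : K) • (FreeAlgebra.ι K 1 * FreeAlgebra.ι K 1))

theorem Subalgebra.mem_center_of_adjoin_eq_top {R A : Type*} [CommSemiring R] [Semiring A]
    [Algebra R A] {s : Set A} (hs : Algebra.adjoin R s = ⊤) {a : A}
    (ha : ∀ b ∈ s, Commute a b) : a ∈ Subalgebra.center R A :=
  Subalgebra.mem_center_iff.mpr fun _ =>
    (Algebra.commute_of_mem_adjoin_of_forall_mem_commute (hs ▸ Algebra.mem_top) ha).eq.symm

theorem RingQuot.adjoin_range_mkAlgHom_ι {R X : Type*} [CommSemiring R]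
    (s : FreeAlgebra R X → FreeAlgebra R X → Prop) :
    Algebra.adjoin R (Set.range fun i => RingQuot.mkAlgHom R s (FreeAlgebra.ι R i)) = ⊤ := by
  rw [Set.range_comp', Algebra.adjoin_image, FreeAlgebra.adjoin_range_ι, Algebra.map_top,
    AlgHom.range_eq_top]
  exact RingQuot.mkAlgHom_surjective R s

section Supersphere

variable {K A : Type*} [CommRing K] [Ring A] [Algebra K A]

-- `x`, `θ`, `y` play the roles of `X₊`, `Θ`, `X₋`.
def supersphere (h : K) (x θ : A) : A := h • (x * x) - θ * θ

structure SatisfiesSPhRel (h : K) (x θ y : A) : Prop where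
  commute_xθ : Commute x θ
  mul_yθ : y * θ = θ * y - (2 * h) • (θ * x)
  mul_xy : x * y = y * x + (2 : K) • (θ * θ)

namespace SatisfiesSPhRel

variable {h : K} {x θ y : A}

theorem mul_self_x_mul_y (hr : SatisfiesSPhRel h x θ y) :
    x * x * y = y * (x * x) + (4 : K) • (x * (θ * θ)) := by
  have hθθx : θ * θ * x = x * (θ * θ) := (hr.commute_xθ.symm.mul_left hr.commute_xθ.symm).eq
  rw [mul_assoc, hr.mul_xy, mul_add, mul_smul_comm, ← mul_assoc, hr.mul_xy, add_mul,
    smul_mul_assoc, mul_assoc y, hθθx]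
  module

theorem mul_self_θ_mul_y (hr : SatisfiesSPhRel h x θ y) :
    θ * θ * y = y * (θ * θ) + (4 * h) • (x * (θ * θ)) := by
  have hθy : θ * y = y * θ + (2 * h) • (θ * x) := by rw [hr.mul_yθ]; abel
  rw [mul_assoc, hθy, mul_add, mul_smul_comm, ← mul_assoc, hθy, add_mul, smul_mul_assoc,
    mul_assoc y, ← hr.commute_xθ.eq, ← mul_assoc θ x θ, ← hr.commute_xθ.eq, mul_assoc x θ θ]
  module

theorem commute_supersphere_x (hr : SatisfiesSPhRel h x θ y) :
    Commute (supersphere h x θ) x :=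
  (((Commute.refl x).mul_left (Commute.refl x)).smul_left h).sub_left
    (hr.commute_xθ.symm.mul_left hr.commute_xθ.symm)

theorem commute_supersphere_θ (hr : SatisfiesSPhRel h x θ y) :
    Commute (supersphere h x θ) θ :=
  ((hr.commute_xθ.mul_left hr.commute_xθ).smul_left h).sub_left
    ((Commute.refl θ).mul_left (Commute.refl θ))

theorem commute_supersphere_y (hr : SatisfiesSPhRel h x θ y) :
    Commute (supersphere h x θ) y := by
  simp only [Commute, SemiconjBy, supersphere, sub_mul, mul_sub, smul_mul_assoc, mul_smul_comm,
    hr.mul_self_x_mul_y, hr.mul_self_θ_mul_y]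
  module

end SatisfiesSPhRel

end Supersphere

theorem SPhRel.satisfiesSPhRel_mkAlgHom_ι {K : Type*} [Field K] (h : K) :
    SatisfiesSPhRel h (RingQuot.mkAlgHom K (SPhRel h) (FreeAlgebra.ι K 0))
      (RingQuot.mkAlgHom K (SPhRel h) (FreeAlgebra.ι K 1))
      (RingQuot.mkAlgHom K (SPhRel h) (FreeAlgebra.ι K 2)) where
  commute_xθ := by
    simpa only [commute_iff_eq, map_mul] using RingQuot.mkAlgHom_rel K (SPhRel.r1 (h := h))
  mul_yθ := by
    simpa only [map_mul, map_sub, map_smul] using RingQuot.mkAlgHom_rel K (SPhRel.r2 (h := h))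
  mul_xy := by
    simpa only [map_mul, map_add, map_smul] using RingQuot.mkAlgHom_rel K (SPhRel.r3 (h := h))

/-- in `O(SP_h^{2|1})` the `h`-deformed supersphere
`r_h = hX₊² - Θ²` is central: it commutes with the generators `X₊`, `Θ`, `X₋`.
Here `Xp` denotes `X₊` and `Xm` denotes `X₋`. -/
theorem h_supersphere_central (K : Type*) [Field K] (h : K) :
    let Xp := RingQuot.mkAlgHom K (SPhRel h) (FreeAlgebra.ι K 0)
    let Θ := RingQuot.mkAlgHom K (SPhRel h) (FreeAlgebra.ι K 1)
    let Xm := RingQuot.mkAlgHom K (SPhRel h) (FreeAlgebra.ι K 2)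
    let r := h • (Xp * Xp) - Θ * Θ
    r ∈ Subalgebra.center K (RingQuot (SPhRel h)) ∧
      r * Xp = Xp * r ∧ r * Θ = Θ * r ∧ r * Xm = Xm * r := by
  intro Xp Θ Xm r
  have hrel : SatisfiesSPhRel h Xp Θ Xm := SPhRel.satisfiesSPhRel_mkAlgHom_ι h
  have hXp : Commute r Xp := hrel.commute_supersphere_x
  have hΘ : Commute r Θ := hrel.commute_supersphere_θ
  have hXm : Commute r Xm := hrel.commute_supersphere_y
  refine ⟨Subalgebra.mem_center_of_adjoin_eq_top (RingQuot.adjoin_range_mkAlgHom_ι _) ?_,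
    hXp.eq, hΘ.eq, hXm.eq⟩
  rintro _ ⟨i, rfl⟩
  fin_cases i
  exacts [hXp, hΘ, hXm]
end

section
/- Let K be a field, q ∈ K nonzero with q ≠ 1, s ∈ K with s² = q, and h ∈ K. In the algebra O(SP_q^{2|1}), set X₊ := x, Θ := θ, and X₋ := y − (h/(q−1))·x (where x, θ, y denote the images of the generators). Then the following identities hold: X₊·Θ = q·Θ·X₊, X₋·Θ = q⁻¹·Θ·X₋ − h·q⁻¹·(q+1)·Θ·X₊, and X₊·X₋ − X₋·X₊ = s⁻¹(q+1)·Θ². (These are the relations which, in the contraction limit q → 1, become the defining relations X₊Θ = ΘX₊, X₋Θ = ΘX₋ − 2hΘX₊, X₊X₋ − X₋X₊ = 2Θ² of the h-deformed superspace SP_h^{2|1}.) -/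
section SatisfiesSPRel

variable {K A : Type*} [Field K] [Ring A] [Algebra K A] {q s : K} {x θ y : A}

structure SatisfiesSPRel (q s : K) (x θ y : A) : Prop where
  xθ : x * θ = q • (θ * x)
  xy : x * y = q ^ 2 • (y * x)
  yθ : y * θ = q⁻¹ • (θ * y)
  θθ : θ * θ = (s * (q - 1)) • (y * x)

open RingQuot in
variable (K) in
theorem satisfiesSPRel_mkAlgHom (q s : K) :
    SatisfiesSPRel q s (mkAlgHom K (SPRel q s) (FreeAlgebra.ι K 0))
      (mkAlgHom K (SPRel q s) (FreeAlgebra.ι K 1))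
      (mkAlgHom K (SPRel q s) (FreeAlgebra.ι K 2)) where
  xθ := by simpa only [map_mul, map_smul] using mkAlgHom_rel K (SPRel.xθ (q := q) (s := s))
  xy := by simpa only [map_mul, map_smul] using mkAlgHom_rel K (SPRel.xy (q := q) (s := s))
  yθ := by simpa only [map_mul, map_smul] using mkAlgHom_rel K (SPRel.yθ (q := q) (s := s))
  θθ := by simpa only [map_mul, map_smul] using mkAlgHom_rel K (SPRel.θθ (q := q) (s := s))

theorem SatisfiesSPRel.sub_smul_mul_right (H : SatisfiesSPRel q s x θ y) (c : K) :
    (y - c • x) * θ = q⁻¹ • (θ * (y - c • x)) - (c * (q - q⁻¹)) • (θ * x) := by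
  rw [sub_mul, smul_mul_assoc, H.xθ, H.yθ, mul_sub, mul_smul_comm]
  module

theorem SatisfiesSPRel.commutator_sub_smul (H : SatisfiesSPRel q s x θ y) (hs : s ≠ 0) (c : K) :
    x * (y - c • x) - (y - c • x) * x = (s⁻¹ * (q + 1)) • (θ * θ) := by
  have hcoeff : s⁻¹ * (q + 1) * (s * (q - 1)) = q ^ 2 - 1 := by
    field_simp
    ring
  rw [H.θθ, smul_smul, hcoeff, mul_sub, sub_mul, mul_smul_comm, smul_mul_assoc, H.xy]
  module

end SatisfiesSPRel

theorem div_sub_one_mul_sub_inv {K : Type*} [Field K] {q : K} (hq1 : q ≠ 1) (h : K) :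
    h / (q - 1) * (q - q⁻¹) = h * q⁻¹ * (q + 1) := by
  rcases eq_or_ne q 0 with rfl | hq0
  · simp
  · field_simp [sub_ne_zero.2 hq1]
    ring

/-- in `O(SP_q^{2|1})` with `q ≠ 1`, the contracted coordinates
`Xp = x`, `Θ = θ`, `Xm = y - (h/(q-1))·x` satisfy the relations that become, in the
limit `q → 1`, the defining relations of the `h`-deformed superspace `SP_h^{2|1}`.
Here `Xp` denotes `X₊` and `Xm` denotes `X₋`. -/
theorem contraction_relations (K : Type*) [Field K] (q s h : K)
    (hq : q ≠ 0) (hq1 : q ≠ 1) (hs : s ^ 2 = q) :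
    let x := RingQuot.mkAlgHom K (SPRel q s) (FreeAlgebra.ι K 0)
    let θ := RingQuot.mkAlgHom K (SPRel q s) (FreeAlgebra.ι K 1)
    let y := RingQuot.mkAlgHom K (SPRel q s) (FreeAlgebra.ι K 2)
    let Xp := x
    let Θ := θ
    let Xm := y - (h / (q - 1)) • x
    Xp * Θ = q • (Θ * Xp) ∧
    Xm * Θ = q⁻¹ • (Θ * Xm) - (h * q⁻¹ * (q + 1)) • (Θ * Xp) ∧
    Xp * Xm - Xm * Xp = (s⁻¹ * (q + 1)) • (Θ * Θ) := by
  intro x θ y Xp Θ Xm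
  have H := satisfiesSPRel_mkAlgHom K q s
  have hs0 : s ≠ 0 := by
    rintro rfl
    exact hq (by simp [← hs])
  refine ⟨H.xθ, ?_, H.commutator_sub_smul hs0 _⟩
  rw [← div_sub_one_mul_sub_inv hq1 h]
  exact H.sub_smul_mul_right _
end
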